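/- Let D be a digraph on a finite vertex set, and let C be a strong component of D that is Eulerian. Then desc(D) = desc(D − C), where D − C is the digraph obtained from D by deleting all vertices of C together with all arcs incident to them. -/

import Mathlib

/-!
Digraphs on a finite vertex type `V` are modelled by their arc sets
`D : Finset (V × V)`, where `(x, y) ∈ D` means there is an arc from `x` to `y`.
-/

namespace DescPaper

variable {V : Type*} [Fintype V] [DecidableEq V]

/-- The out-degree of `x` in the digraph `D`. -/
def outDeg (D : Finset (V × V)) (x : V) : ℕ :=
  (D.filter (fun a => a.1 = x)).card

/-- The in-degree of `x` in the digraph `D`. -/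
def inDeg (D : Finset (V × V)) (x : V) : ℕ :=
  (D.filter (fun a => a.2 = x)).card

/-- The number of arcs of `D` from `x` to a vertex of `Y`. -/
def outDegInto (D : Finset (V × V)) (x : V) (Y : Finset V) : ℕ :=
  (D.filter (fun a => a.1 = x ∧ a.2 ∈ Y)).card

/-- The subgraph of `D` induced by the vertex set `X`. -/
def induce (D : Finset (V × V)) (X : Finset V) : Finset (V × V) :=
  D.filter (fun a => a.1 ∈ X ∧ a.2 ∈ X)

/-- Reachability by a directed path in the digraph `D`. -/
def Reach (D : Finset (V × V)) : V → V → Prop :=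
  Relation.ReflTransGen (fun u v => (u, v) ∈ D)

/-- The subgraph of `D` induced by `X` is strongly connected. -/
def StronglyConnectedOn (D : Finset (V × V)) (X : Finset V) : Prop :=
  ∀ x ∈ X, ∀ y ∈ X, Reach (induce D X) x y

/-- `X` is the vertex set of a strong component of `D`:
a maximal (nonempty) vertex set inducing a strongly connected subgraph. -/
def IsStrongComponent (D : Finset (V × V)) (X : Finset V) : Prop :=
  X.Nonempty ∧ StronglyConnectedOn D X ∧
    ∀ Y : Finset V, X ⊆ Y → StronglyConnectedOn D Y → Y = X

/-- The digraph `D` is balanced: every vertex has equal in- and out-degree. -/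
def IsBalanced (D : Finset (V × V)) : Prop :=
  ∀ x : V, outDeg D x = inDeg D x

/-- The subgraph of `D` induced by `X` is Eulerian:
strongly connected and balanced. -/
def EulerianOn (D : Finset (V × V)) (X : Finset V) : Prop :=
  StronglyConnectedOn D X ∧ IsBalanced (induce D X)

/-- `A'` is a DESC-set of `D`: a set of arcs of `D` such that every strong
component of `D - A'` is Eulerian. -/
def IsDESC (D A' : Finset (V × V)) : Prop :=
  A' ⊆ D ∧ ∀ X : Finset V, IsStrongComponent (D \ A') X → EulerianOn (D \ A') X

/-- `desc D` is the minimum size of a DESC-set of `D`. -/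
noncomputable def desc (D : Finset (V × V)) : ℕ :=
  sInf {n | ∃ A' : Finset (V × V), IsDESC D A' ∧ A'.card = n}

/-- `T` is a tournament: no loops, and for every pair of distinct vertices
exactly one of the two possible arcs is present. -/
def IsTournament (T : Finset (V × V)) : Prop :=
  (∀ x : V, (x, x) ∉ T) ∧ ∀ x y : V, x ≠ y → ((x, y) ∈ T ↔ (y, x) ∉ T)

/-- `dstar A' X Y` is the number of arcs of `A'` with one endpoint in `X`
and the other endpoint in `Y` (in either direction). -/
def dstar (A' : Finset (V × V)) (X Y : Finset V) : ℕ :=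
  (A'.filter (fun a => (a.1 ∈ X ∧ a.2 ∈ Y) ∨ (a.1 ∈ Y ∧ a.2 ∈ X))).card

end DescPaper

open DescPaper

/-!
A DESC-set never needs arcs incident to the Eulerian strong component `X`. If `A` is a DESC-set
of `D - X`, then `X` is still an Eulerian strong component of `D - A`, and every other strong
component of `D - A` avoids `X`, hence is a strong component of `(D - X) - A`. Conversely, if
`A` is a DESC-set of `D`, then `A ∩ (D - X)` is a DESC-set of `D - X`: the strong components of
`(D - X) - A` avoiding `X` are those of `D - A` (a strongly connected set of `D - A` meeting `X`
lies inside `X`), and the vertices of `X` are isolated in `D - X`.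
-/

namespace DescPaper

variable {V : Type*}

theorem Reach.mono {D E : Finset (V × V)} (h : D ⊆ E) {x y : V} (hr : Reach D x y) :
    Reach E x y :=
  Relation.ReflTransGen.mono (fun _ _ huv => h huv) _ _ hr

theorem Reach.exists_out_arc {E : Finset (V × V)} {x y : V} (h : Reach E x y) (hne : x ≠ y) :
    ∃ c, (x, c) ∈ E := by
  rcases h.cases_head with rfl | ⟨c, hc, -⟩
  · exact absurd rfl hne
  · exact ⟨c, hc⟩

variable [DecidableEq V]

/-- The digraph `D - X`; the vertices of `X` stay, as isolated vertices. -/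
abbrev deleteVerts (D : Finset (V × V)) (X : Finset V) : Finset (V × V) :=
  D.filter (fun a => a.1 ∉ X ∧ a.2 ∉ X)

theorem induce_mono {D E : Finset (V × V)} {X Y : Finset V} (hDE : D ⊆ E) (hXY : X ⊆ Y) :
    induce D X ⊆ induce E Y := by
  intro a ha
  simp only [induce, Finset.mem_filter] at ha ⊢
  exact ⟨hDE ha.1, hXY ha.2.1, hXY ha.2.2⟩

theorem stronglyConnectedOn_congr {E F : Finset (V × V)} {Y : Finset V}
    (h : induce E Y = induce F Y) : StronglyConnectedOn E Y ↔ StronglyConnectedOn F Y := by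
  rw [StronglyConnectedOn, StronglyConnectedOn, h]

theorem eulerianOn_congr {E F : Finset (V × V)} {Y : Finset V}
    (h : induce E Y = induce F Y) : EulerianOn E Y ↔ EulerianOn F Y := by
  rw [EulerianOn, EulerianOn, stronglyConnectedOn_congr h, h]

theorem StronglyConnectedOn.mono {D E : Finset (V × V)} (h : D ⊆ E) {X : Finset V}
    (hX : StronglyConnectedOn D X) : StronglyConnectedOn E X :=
  fun x hx y hy => (hX x hx y hy).mono (induce_mono h subset_rfl)

theorem StronglyConnectedOn.union {D : Finset (V × V)} {X Z : Finset V}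
    (hX : StronglyConnectedOn D X) (hZ : StronglyConnectedOn D Z) {w : V}
    (hwX : w ∈ X) (hwZ : w ∈ Z) : StronglyConnectedOn D (X ∪ Z) := by
  have reach_within {Y : Finset V} (hYsub : Y ⊆ X ∪ Z) (hY : StronglyConnectedOn D Y) {x y : V}
      (hx : x ∈ Y) (hy : y ∈ Y) : Reach (induce D (X ∪ Z)) x y :=
    (hY x hx y hy).mono (induce_mono subset_rfl hYsub)
  have hXsub : X ⊆ X ∪ Z := Finset.subset_union_left
  have hZsub : Z ⊆ X ∪ Z := Finset.subset_union_right
  intro x hx y hy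
  have hxw : Reach (induce D (X ∪ Z)) x w := by
    rcases Finset.mem_union.1 hx with h | h
    exacts [reach_within hXsub hX h hwX, reach_within hZsub hZ h hwZ]
  have hwy : Reach (induce D (X ∪ Z)) w y := by
    rcases Finset.mem_union.1 hy with h | h
    exacts [reach_within hXsub hX hwX h, reach_within hZsub hZ hwZ h]
  exact hxw.trans hwy

theorem StronglyConnectedOn.eq_singleton {E : Finset (V × V)} {Y : Finset V}
    (hY : StronglyConnectedOn E Y) {w : V} (hw : w ∈ Y) (hsink : ∀ c, (w, c) ∉ E) :
    Y = {w} := by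
  refine Finset.eq_singleton_iff_unique_mem.2 ⟨hw, fun z hz => ?_⟩
  by_contra hzw
  obtain ⟨c, hc⟩ := (hY w hw z hz).exists_out_arc (Ne.symm hzw)
  exact hsink c (Finset.mem_filter.1 hc).1

theorem eulerianOn_singleton (D : Finset (V × V)) (x : V) : EulerianOn D {x} := by
  refine ⟨?_, fun y => ?_⟩
  · intro a ha b hb
    rw [Finset.mem_singleton] at ha hb
    subst ha hb
    exact Relation.ReflTransGen.refl
  · unfold outDeg inDeg
    congr 1
    ext a
    simp only [induce, Finset.mem_filter, Finset.mem_singleton]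
    grind

theorem IsStrongComponent.subset_of_stronglyConnectedOn {D : Finset (V × V)} {X Z : Finset V}
    (hX : IsStrongComponent D X) (hZ : StronglyConnectedOn D Z) {w : V}
    (hwX : w ∈ X) (hwZ : w ∈ Z) : Z ⊆ X := by
  rw [← hX.2.2 (X ∪ Z) Finset.subset_union_left (hX.2.1.union hZ hwX hwZ)]
  exact Finset.subset_union_right

theorem induce_deleteVerts {E : Finset (V × V)} {X Y : Finset V} (hYX : Disjoint Y X) :
    induce (deleteVerts E X) Y = induce E Y := by
  ext a
  simp only [induce, Finset.mem_filter]
  grind [Finset.disjoint_left]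

theorem deleteVerts_sdiff (D A : Finset (V × V)) (X : Finset V) :
    deleteVerts D X \ A = deleteVerts (D \ A) X := by
  ext a
  simp only [Finset.mem_sdiff, Finset.mem_filter]
  tauto

theorem isStrongComponent_deleteVerts_iff {D E : Finset (V × V)} {X Y : Finset V}
    (hED : E ⊆ D) (hX : IsStrongComponent D X) (hYX : Disjoint Y X) :
    IsStrongComponent (deleteVerts E X) Y ↔ IsStrongComponent E Y := by
  have disjoint_of_superset {Z : Finset V} (hY : Y.Nonempty) (hYZ : Y ⊆ Z)
      (hZ : StronglyConnectedOn E Z) : Disjoint Z X := by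
    refine Finset.disjoint_left.2 fun w hwZ hwX => ?_
    obtain ⟨y, hy⟩ := hY
    have hZX := hX.subset_of_stronglyConnectedOn (hZ.mono hED) hwX hwZ
    exact Finset.disjoint_left.1 hYX hy (hZX (hYZ hy))
  have sc_iff {Z : Finset V} (hZX : Disjoint Z X) :
      StronglyConnectedOn (deleteVerts E X) Z ↔ StronglyConnectedOn E Z :=
    stronglyConnectedOn_congr (induce_deleteVerts hZX)
  constructor
  · rintro ⟨hne, hsc, hmax⟩
    exact ⟨hne, (sc_iff hYX).1 hsc, fun Z hYZ hZ =>
      hmax Z hYZ ((sc_iff (disjoint_of_superset hne hYZ hZ)).2 hZ)⟩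
  · rintro ⟨hne, hsc, hmax⟩
    exact ⟨hne, (sc_iff hYX).2 hsc, fun Z hYZ hZ => hmax Z hYZ (hZ.mono (Finset.filter_subset _ _))⟩

theorem isDESC_self (D : Finset (V × V)) : IsDESC D D := by
  refine ⟨subset_rfl, fun Y hY => ?_⟩
  obtain ⟨y, hy⟩ := hY.1
  rw [hY.2.1.eq_singleton hy (by simp)]
  exact eulerianOn_singleton _ y

theorem desc_le_card {D A : Finset (V × V)} (h : IsDESC D A) : desc D ≤ A.card :=
  Nat.sInf_le ⟨A, h, rfl⟩

theorem exists_isDESC_card_eq_desc (D : Finset (V × V)) :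
    ∃ A, IsDESC D A ∧ A.card = desc D :=
  Nat.sInf_mem (s := {n | ∃ A, IsDESC D A ∧ A.card = n}) ⟨D.card, D, isDESC_self D, rfl⟩

theorem IsDESC.of_deleteVerts {D A : Finset (V × V)} {X : Finset V}
    (hX : IsStrongComponent D X) (hE : EulerianOn D X) (h : IsDESC (deleteVerts D X) A) :
    IsDESC D A := by
  obtain ⟨hAD, hA⟩ := h
  have hindX : induce (D \ A) X = induce D X := by
    ext a
    simp only [induce, Finset.mem_filter, Finset.mem_sdiff]
    have := fun (ha : a ∈ A) => (Finset.mem_filter.1 (hAD ha)).2.1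
    tauto
  refine ⟨hAD.trans (Finset.filter_subset _ _), fun Y hY => ?_⟩
  by_cases hYX : Disjoint Y X
  · have hYcomp := (isStrongComponent_deleteVerts_iff Finset.sdiff_subset hX hYX).2 hY
    rw [← deleteVerts_sdiff] at hYcomp
    rw [← eulerianOn_congr (induce_deleteVerts hYX), ← deleteVerts_sdiff]
    exact hA Y hYcomp
  · obtain ⟨w, hwY, hwX⟩ := Finset.not_disjoint_iff.1 hYX
    have hXsc : StronglyConnectedOn (D \ A) X := (stronglyConnectedOn_congr hindX).2 hE.1
    have hYsubX := hX.subset_of_stronglyConnectedOn (hY.2.1.mono Finset.sdiff_subset) hwX hwY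
    rw [← hY.2.2 X hYsubX hXsc, eulerianOn_congr hindX]
    exact hE

theorem IsDESC.inter_deleteVerts {D A : Finset (V × V)} {X : Finset V}
    (hX : IsStrongComponent D X) (h : IsDESC D A) :
    IsDESC (deleteVerts D X) (A ∩ deleteVerts D X) := by
  refine ⟨Finset.inter_subset_right, fun Y hY => ?_⟩
  rw [Finset.sdiff_inter_self_right, deleteVerts_sdiff] at hY ⊢
  by_cases hYX : Disjoint Y X
  · rw [eulerianOn_congr (induce_deleteVerts hYX)]
    exact h.2 Y ((isStrongComponent_deleteVerts_iff Finset.sdiff_subset hX hYX).1 hY)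
  · obtain ⟨w, hwY, hwX⟩ := Finset.not_disjoint_iff.1 hYX
    rw [hY.2.1.eq_singleton hwY fun c hc => (Finset.mem_filter.1 hc).2.1 hwX]
    exact eulerianOn_singleton _ w

end DescPaper

theorem stmt9_general {V : Type*} [DecidableEq V]
    (D : Finset (V × V)) (X : Finset V)
    (hX : IsStrongComponent D X) (hE : EulerianOn D X) :
    desc D = desc (D.filter (fun a => a.1 ∉ X ∧ a.2 ∉ X)) := by
  obtain ⟨A, hA, hAcard⟩ := exists_isDESC_card_eq_desc D
  obtain ⟨B, hB, hBcard⟩ := exists_isDESC_card_eq_desc (deleteVerts D X)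
  apply le_antisymm
  · exact hBcard ▸ desc_le_card (hB.of_deleteVerts hX hE)
  · calc desc (deleteVerts D X) ≤ (A ∩ deleteVerts D X).card :=
          desc_le_card (hA.inter_deleteVerts hX)
      _ ≤ A.card := Finset.card_le_card Finset.inter_subset_left
      _ = desc D := hAcard

/-- Deleting an Eulerian strong component (its vertices together
with all arcs incident to them) does not change `desc`. -/
theorem stmt9 {V : Type*} [Fintype V] [DecidableEq V]
    (D : Finset (V × V)) (X : Finset V)
    (hX : IsStrongComponent D X) (hE : EulerianOn D X) :
    desc D = desc (D.filter (fun a => a.1 ∉ X ∧ a.2 ∉ X)) :=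
  stmt9_general D X hX hE
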